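/- arXiv:gr-qc/0011050 — 4 statements merged into one kernel-verified Lean document; each statement's English description precedes it below -/
import Mathlib

section
/- Any bijection of ℝⁿ (n ≥ 2) that maps straight lines onto straight lines is an affine map, i.e., of the form x ↦ Ax + a with A an invertible n×n real matrix and a ∈ ℝⁿ. -/
/-!
Subtracting `f 0`, we may assume the bijection `g` fixes `0`; then it maps each line `ℝ x` onto
the line `ℝ (g x)` and preserves linear independence. Every point of the plane `span {x, y}` is
the midpoint of a point of `ℝ x` and a point of `ℝ y`, so `g` maps that plane into
`span {g x, g y}`. By injectivity the image of the line `x + ℝ y`, which misses `ℝ y`, misses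
`ℝ (g y)`; a line of the plane missing `ℝ (g y)` is parallel to it, so `g` maps `x + ℝ y` onto
`g x + ℝ (g y)`. Intersecting with the image of `y + ℝ x` gives `g (x + y) = g x + g y` for
independent `x, y`, and a third direction extends additivity to all pairs. Then
`g (t • x) = σ t • g x` for one additive and multiplicative `σ : ℝ → ℝ`, which is the identity
because `ℝ` has no nontrivial ring endomorphism.
-/

open Function Set Submodule

namespace AffineGeometry

variable {V : Type*} [AddCommGroup V] [Module ℝ V]

def line (x v : V) : Set V := {p | ∃ t : ℝ, p = x + t • v}

theorem self_mem_line (x v : V) : x ∈ line x v := ⟨0, by simp⟩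

theorem add_mem_line (x v : V) : x + v ∈ line x v := ⟨1, by simp⟩

theorem mem_line_zero {v p : V} : p ∈ line 0 v ↔ ∃ t : ℝ, p = t • v := by
  simp [line]

theorem line_smul (x v : V) {c : ℝ} (hc : c ≠ 0) : line x (c • v) = line x v := by
  ext p
  constructor
  · rintro ⟨t, rfl⟩
    exact ⟨t * c, by rw [smul_smul]⟩
  · rintro ⟨t, rfl⟩
    exact ⟨t / c, by rw [smul_smul, div_mul_cancel₀ t hc]⟩

theorem line_eq_of_mem {x v p : V} (hp : p ∈ line x v) : line x v = line p v := by
  obtain ⟨a, rfl⟩ := hp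
  ext q
  constructor
  · rintro ⟨t, rfl⟩
    exact ⟨t - a, by module⟩
  · rintro ⟨t, rfl⟩
    exact ⟨a + t, by module⟩

theorem line_eq_of_mem_of_mem {x v p q : V} (hp : p ∈ line x v) (hq : q ∈ line x v)
    (hpq : p ≠ q) : line x v = line p (q - p) := by
  obtain ⟨a, rfl⟩ := hp
  obtain ⟨b, rfl⟩ := hq
  have hab : b - a ≠ 0 := sub_ne_zero.mpr fun h => hpq (by rw [h])
  rw [line_eq_of_mem ⟨a, rfl⟩, show x + b • v - (x + a • v) = (b - a) • v by module,
    line_smul _ _ hab]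

theorem line_subset_span_pair (x v : V) : line x v ⊆ span ℝ {x, v} := by
  rintro _ ⟨t, rfl⟩
  exact mem_span_pair.mpr ⟨1, t, by rw [one_smul]⟩

theorem disjoint_line_line_zero {x v : V} (hxv : LinearIndependent ℝ ![x, v]) :
    Disjoint (line x v) (line 0 v) := by
  refine Set.disjoint_left.mpr ?_
  rintro _ ⟨t, rfl⟩ ⟨s, hs⟩
  have := hxv.eq_of_pair (s := 1) (t := t) (s' := 0) (t' := s) (by simpa using hs)
  exact one_ne_zero this.1

theorem line_eq_of_subset_span_of_disjoint {a b u w : V} (hw : w ≠ 0)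
    (hspan : line u w ⊆ span ℝ {a, b}) (hdisj : Disjoint (line u w) (line 0 b))
    (ha : a ∈ line u w) : line u w = line a b := by
  obtain ⟨c₀, d₀, hu⟩ := mem_span_pair.mp (hspan (self_mem_line u w))
  obtain ⟨c₁, d₁, huw⟩ := mem_span_pair.mp (hspan (add_mem_line u w))
  have hw' : w = (c₁ - c₀) • a + (d₁ - d₀) • b := by
    rw [← add_sub_cancel_left u w, ← huw, ← hu]; module
  have hc : c₀ = c₁ := by
    by_contra hc
    have hsub : c₀ - c₁ ≠ 0 := sub_ne_zero.mpr hc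
    refine Set.disjoint_left.mp hdisj ⟨c₀ / (c₀ - c₁), rfl⟩
      (mem_line_zero.mpr ⟨d₀ + c₀ / (c₀ - c₁) * (d₁ - d₀), ?_⟩)
    rw [hw', ← hu]
    match_scalars
    · field_simp
      ring
    · ring
  have hd : d₁ - d₀ ≠ 0 := fun hd => hw (by rw [hw', hc, hd]; simp)
  rw [line_eq_of_mem ha, hw', hc, sub_self, zero_smul, zero_add, line_smul _ _ hd]

theorem _root_.LinearIndependent.pair_smul_left {K M : Type*} [Field K] [AddCommGroup M]
    [Module K M] {x z : M} (h : LinearIndependent K ![x, z]) {a : K} (ha : a ≠ 0) :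
    LinearIndependent K ![a • x, z] := by
  simpa using (LinearIndependent.pair_smul_smul_iff ha.isUnit isUnit_one).mpr h

def MapsLinesToLines (g : V → V) : Prop :=
  ∀ x v : V, v ≠ 0 → ∃ y w : V, w ≠ 0 ∧ g '' line x v = line y w

namespace MapsLinesToLines

variable {g : V → V}

theorem sub_const (hg : MapsLinesToLines g) (c : V) : MapsLinesToLines fun p => g p - c := by
  intro x v hv
  obtain ⟨y, w, hw, himg⟩ := hg x v hv
  refine ⟨y - c, w, hw, ?_⟩
  rw [show (fun p => g p - c) = (· - c) ∘ g from rfl, image_comp, himg]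
  ext p
  constructor
  · rintro ⟨_, ⟨t, rfl⟩, rfl⟩
    exact ⟨t, add_sub_right_comm _ _ _⟩
  · rintro ⟨t, rfl⟩
    exact ⟨y + t • w, ⟨t, rfl⟩, add_sub_right_comm _ _ _⟩

theorem image_line (hgl : MapsLinesToLines g) (hg : Injective g) {x v p q : V} (hv : v ≠ 0)
    (hp : p ∈ line x v) (hq : q ∈ line x v) (hpq : p ≠ q) :
    g '' line x v = line (g p) (g q - g p) := by
  obtain ⟨y, w, -, himg⟩ := hgl x v hv
  rw [himg]
  exact line_eq_of_mem_of_mem (himg ▸ mem_image_of_mem g hp) (himg ▸ mem_image_of_mem g hq)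
    (hg.ne hpq)

theorem image_line_zero (hgl : MapsLinesToLines g) (hg : Injective g) (hg0 : g 0 = 0) {x : V}
    (hx : x ≠ 0) : g '' line 0 x = line 0 (g x) := by
  simpa [hg0] using hgl.image_line hg hx (self_mem_line 0 x) ⟨1, by simp⟩ hx.symm

theorem exists_map_smul (hgl : MapsLinesToLines g) (hg : Injective g) (hg0 : g 0 = 0) (x : V)
    (t : ℝ) : ∃ s : ℝ, g (t • x) = s • g x := by
  rcases eq_or_ne x 0 with rfl | hx
  · exact ⟨0, by simp [hg0]⟩
  · have : g (t • x) ∈ g '' line 0 x := mem_image_of_mem g (mem_line_zero.mpr ⟨t, rfl⟩)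
    rwa [hgl.image_line_zero hg hg0 hx, mem_line_zero] at this

theorem linearIndependent_pair (hgl : MapsLinesToLines g) (hg : Injective g) (hg0 : g 0 = 0)
    {x y : V} (hxy : LinearIndependent ℝ ![x, y]) : LinearIndependent ℝ ![g x, g y] := by
  have hx : x ≠ 0 := by simpa using hxy.ne_zero 0
  have hgx : g x ≠ 0 := fun h => hx (hg (h.trans hg0.symm))
  rw [LinearIndependent.pair_iff' hgx]
  intro a ha
  have : g y ∈ g '' line 0 x := by
    rw [hgl.image_line_zero hg hg0 hx]
    exact mem_line_zero.mpr ⟨a, ha.symm⟩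
  obtain ⟨_, ⟨t, rfl⟩, hty⟩ := this
  exact (LinearIndependent.pair_iff' hx).mp hxy t (by simpa using hg hty)

theorem map_mem_span_pair (hgl : MapsLinesToLines g) (hg : Injective g) (hg0 : g 0 = 0)
    {x y z : V} (hxy : LinearIndependent ℝ ![x, y]) (hz : z ∈ span ℝ {x, y}) :
    g z ∈ span ℝ {g x, g y} := by
  obtain ⟨a, b, rfl⟩ := mem_span_pair.mp hz
  by_cases hab : a = 0 ∧ b = 0
  · simp [hab.1, hab.2, hg0]
  have hne : (2 * a) • x ≠ (2 * b) • y := fun h => hab (by simpa using hxy.eq_zero_of_pair' h)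
  -- `a • x + b • y` is the midpoint of `(2 * a) • x` and `(2 * b) • y`
  have hmid : g (a • x + b • y) ∈ line (g ((2 * a) • x)) (g ((2 * b) • y) - g ((2 * a) • x)) := by
    rw [← hgl.image_line hg (sub_ne_zero.mpr hne.symm) (self_mem_line _ _) ⟨1, by simp⟩ hne]
    exact mem_image_of_mem g ⟨1 / 2, by module⟩
  obtain ⟨t, ht⟩ := hmid
  obtain ⟨s, hs⟩ := hgl.exists_map_smul hg hg0 x (2 * a)
  obtain ⟨s', hs'⟩ := hgl.exists_map_smul hg hg0 y (2 * b)
  exact mem_span_pair.mpr ⟨(1 - t) * s, t * s', by rw [ht, hs, hs']; module⟩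

theorem image_line_of_linearIndependent (hgl : MapsLinesToLines g) (hg : Injective g)
    (hg0 : g 0 = 0) {x y : V} (hxy : LinearIndependent ℝ ![x, y]) :
    g '' line x y = line (g x) (g y) := by
  have hy : y ≠ 0 := by simpa using hxy.ne_zero 1
  obtain ⟨u, w, hw, himg⟩ := hgl x y hy
  rw [himg]
  refine line_eq_of_subset_span_of_disjoint hw ?_ ?_ ?_ <;> rw [← himg]
  · rintro _ ⟨p, hp, rfl⟩
    exact hgl.map_mem_span_pair hg hg0 hxy (line_subset_span_pair x y hp)
  · rw [← hgl.image_line_zero hg hg0 hy]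
    exact (disjoint_image_iff hg).mpr (disjoint_line_line_zero hxy)
  · exact mem_image_of_mem g (self_mem_line x y)

theorem map_add_of_linearIndependent (hgl : MapsLinesToLines g) (hg : Injective g)
    (hg0 : g 0 = 0) {x y : V} (hxy : LinearIndependent ℝ ![x, y]) : g (x + y) = g x + g y := by
  obtain ⟨t, ht⟩ : g (x + y) ∈ line (g x) (g y) := by
    rw [← hgl.image_line_of_linearIndependent hg hg0 hxy]
    exact mem_image_of_mem g (add_mem_line x y)
  obtain ⟨s, hs⟩ : g (x + y) ∈ line (g y) (g x) := by
    rw [← hgl.image_line_of_linearIndependent hg hg0 (LinearIndependent.pair_symm_iff.mp hxy),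
      add_comm]
    exact mem_image_of_mem g (add_mem_line y x)
  have hcoeff := (hgl.linearIndependent_pair hg hg0 hxy).eq_of_pair (s := 1) (t := t) (s' := s)
    (t' := 1) (by rw [one_smul, one_smul, ← ht, hs, add_comm])
  rw [ht, hcoeff.2, one_smul]

theorem map_add (hgl : MapsLinesToLines g) (hg : Injective g) (hg0 : g 0 = 0)
    (hV : 1 < Module.rank ℝ V) (x y : V) : g (x + y) = g x + g y := by
  rcases eq_or_ne x 0 with rfl | hx
  · simp [hg0]
  by_cases hxy : LinearIndependent ℝ ![x, y]
  · exact hgl.map_add_of_linearIndependent hg hg0 hxy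
  obtain ⟨e, rfl⟩ : ∃ e : ℝ, e • x = y := by simpa [LinearIndependent.pair_iff' hx] using hxy
  -- compare both ways of splitting `(1 + e) • x + z` for some `z` off the line `ℝ x`
  obtain ⟨z, hxz⟩ := exists_linearIndependent_pair_of_one_lt_rank hV hx
  have hsplit : ∀ a : ℝ, g (a • x + z) = g (a • x) + g z := by
    intro a
    rcases eq_or_ne a 0 with rfl | ha
    · simp [hg0]
    · exact hgl.map_add_of_linearIndependent hg hg0 (hxz.pair_smul_left ha)
  have hshear : g (x + (e • x + z)) = g x + g (e • x + z) :=
    hgl.map_add_of_linearIndependent hg hg0 ((LinearIndependent.pair_add_smul_right_iff e).mpr hxz)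
  have := hsplit (1 + e)
  rw [show (1 + e) • x + z = x + (e • x + z) by module, hshear, hsplit e, add_smul,
    one_smul] at this
  exact add_right_cancel (this.symm.trans (add_assoc _ _ _).symm)

theorem smul_coeff_eq_of_linearIndependent (hgl : MapsLinesToLines g) (hg : Injective g)
    (hg0 : g 0 = 0) (hV : 1 < Module.rank ℝ V) {x z : V} (hxz : LinearIndependent ℝ ![x, z])
    {t s s' : ℝ} (hs : g (t • x) = s • g x) (hs' : g (t • z) = s' • g z) : s = s' := by
  obtain ⟨r, hr⟩ := hgl.exists_map_smul hg hg0 (x + z) t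
  rw [smul_add, hgl.map_add hg hg0 hV, hgl.map_add hg hg0 hV, hs, hs', smul_add] at hr
  have hcoeff := (hgl.linearIndependent_pair hg hg0 hxz).eq_of_pair hr
  rw [hcoeff.1, hcoeff.2]

theorem exists_ringHom_map_smul (hgl : MapsLinesToLines g) (hg : Injective g) (hg0 : g 0 = 0)
    (hV : 1 < Module.rank ℝ V) : ∃ σ : ℝ →+* ℝ, ∀ (t : ℝ) (x : V), g (t • x) = σ t • g x := by
  have : Nontrivial V := rank_pos_iff_nontrivial.mp (zero_lt_one.trans hV)
  obtain ⟨u, hu⟩ := exists_ne (0 : V)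
  obtain ⟨z, huz⟩ := exists_linearIndependent_pair_of_one_lt_rank hV hu
  choose σ hσ using hgl.exists_map_smul hg hg0 u
  have hσ_all : ∀ (t : ℝ) (x : V), g (t • x) = σ t • g x := by
    intro t x
    rcases eq_or_ne x 0 with rfl | hx
    · simp [hg0]
    obtain ⟨s, hs⟩ := hgl.exists_map_smul hg hg0 x t
    rw [hs]
    by_cases hux : LinearIndependent ℝ ![u, x]
    · rw [hgl.smul_coeff_eq_of_linearIndependent hg hg0 hV hux (hσ t) hs]
    obtain ⟨e, rfl⟩ : ∃ e : ℝ, e • u = x := by simpa [LinearIndependent.pair_iff' hu] using hux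
    have hzx : LinearIndependent ℝ ![e • u, z] := huz.pair_smul_left (by rintro rfl; simp at hx)
    obtain ⟨s', hs'⟩ := hgl.exists_map_smul hg hg0 z t
    rw [hgl.smul_coeff_eq_of_linearIndependent hg hg0 hV hzx hs hs',
      hgl.smul_coeff_eq_of_linearIndependent hg hg0 hV huz (hσ t) hs']
  have hgu : g u ≠ 0 := fun h => hu (hg (h.trans hg0.symm))
  have hσ_eq {a b : ℝ} (h : a • g u = b • g u) : a = b := smul_left_injective ℝ hgu h
  refine ⟨{ toFun := σ, map_one' := ?_, map_mul' := ?_, map_zero' := ?_, map_add' := ?_ }, hσ_all⟩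
  · exact hσ_eq (by rw [← hσ, one_smul, one_smul])
  · intro a b
    exact hσ_eq (by rw [← hσ, mul_smul, hσ_all, hσ, smul_smul])
  · exact hσ_eq (by rw [← hσ, zero_smul, zero_smul, hg0])
  · intro a b
    exact hσ_eq (by rw [← hσ, add_smul, hgl.map_add hg hg0 hV, hσ, hσ, add_smul])

theorem map_smul (hgl : MapsLinesToLines g) (hg : Injective g) (hg0 : g 0 = 0)
    (hV : 1 < Module.rank ℝ V) (t : ℝ) (x : V) : g (t • x) = t • g x := by
  obtain ⟨σ, hσ⟩ := hgl.exists_ringHom_map_smul hg hg0 hV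
  rw [hσ, Subsingleton.elim σ (RingHom.id ℝ), RingHom.id_apply]

theorem isLinearMap (hgl : MapsLinesToLines g) (hg : Injective g) (hg0 : g 0 = 0)
    (hV : 1 < Module.rank ℝ V) : IsLinearMap ℝ g :=
  ⟨hgl.map_add hg hg0 hV, hgl.map_smul hg hg0 hV⟩

theorem exists_linearEquiv (f : V ≃ V) (hf : MapsLinesToLines f) (hV : 1 < Module.rank ℝ V) :
    ∃ A : V ≃ₗ[ℝ] V, ∀ x, f x = A x + f 0 := by
  have hg : Injective fun p => f p - f 0 := fun p q h => f.injective (sub_left_injective h)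
  have hA := (hf.sub_const (f 0)).isLinearMap hg (sub_self _) hV
  have hA_surj : Surjective fun p => f p - f 0 := fun y => ⟨f.symm (y + f 0), by simp⟩
  exact ⟨.ofBijective (IsLinearMap.mk' _ hA) ⟨hg, hA_surj⟩, fun x => (sub_add_cancel _ _).symm⟩

end MapsLinesToLines

end AffineGeometry

/-- Fundamental theorem of real affine geometry: any bijection of `ℝⁿ` (`n ≥ 2`)
mapping straight lines onto straight lines is an affine map `x ↦ A x + a` with
`A` an invertible linear map. -/
theorem bijection_mapping_lines_to_lines_is_affine
    (n : ℕ) (hn : 2 ≤ n) (f : (Fin n → ℝ) ≃ (Fin n → ℝ))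
    (hlines : ∀ (x v : Fin n → ℝ), v ≠ 0 → ∃ (y w : Fin n → ℝ), w ≠ 0 ∧
        (⇑f) '' {p | ∃ t : ℝ, p = x + t • v} = {p | ∃ t : ℝ, p = y + t • w}) :
    ∃ (A : (Fin n → ℝ) →ₗ[ℝ] (Fin n → ℝ)) (a : Fin n → ℝ),
      Function.Bijective A ∧ ∀ x, f x = A x + a := by
  have hV : 1 < Module.rank ℝ (Fin n → ℝ) := by
    rw [rank_fin_fun]
    exact_mod_cast hn
  obtain ⟨A, hA⟩ := AffineGeometry.MapsLinesToLines.exists_linearEquiv f hlines hV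
  exact ⟨A, f 0, A.bijective, hA⟩
end

section
/- Let S be a non-trivial IGal-invariant equivalence relation on ℝ⁴. Then every equivalence class is a union of hyperplanes Σ_t = {(t,x) | x ∈ ℝ³}; that is, if S(p,q) for two distinct points p,q, then the entire hyperplane of constant time through p is contained in [p]. -/
/-- The action of an inhomogeneous Galilei group element `(R, v, a, b)` on
spacetime `ℝ × ℝ³`: `(t, x) ↦ (t + b, R x + t v + a)`. -/
def galAct (R : Matrix (Fin 3) (Fin 3) ℝ) (v a : Fin 3 → ℝ) (b : ℝ) :
    ℝ × (Fin 3 → ℝ) → ℝ × (Fin 3 → ℝ) :=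
  fun p => (p.1 + b, R.mulVec p.2 + p.1 • v + a)

/-!
Translations reduce an invariant equivalence relation `S` to the additive subgroup `H` of
differences `q - p` with `S p q`, and boosts and rotations act on `H` linearly. If `H` contains
a vector `(t, x)` with `t ≠ 0`, boosts shear it onto every `(t, y)`, and differences give all of
`{0} × ℝ³`. Otherwise `H` contains a nonzero spatial vector `e`; half-turns carry `e` to minus
any vector of the same length, so `H` contains a whole sphere, and sums of two points of a sphere
fill a neighbourhood of `0` on each coordinate axis, which generates `ℝ` since `ℝ` is connected.
-/

open Matrix Topology

theorem AddSubgroup.eq_top_of_mem_nhds_zero {G : Type*} [AddGroup G] [TopologicalSpace G]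
    [SeparatelyContinuousAdd G] [ConnectedSpace G] (H : AddSubgroup G)
    (hH : (H : Set G) ∈ 𝓝 0) : H = ⊤ := by
  have hopen := H.isOpen_of_mem_nhds hH
  exact AddSubgroup.coe_eq_univ.1
    (IsClopen.eq_univ ⟨H.isClosed_of_isOpen hopen, hopen⟩ ⟨0, H.zero_mem⟩)

namespace Setoid

variable {G : Type*} [AddCommGroup G] (S : Setoid G)
  (hS : ∀ c p q, S p q → S (p + c) (q + c))

def zeroClass : AddSubgroup G where
  carrier := {d | S 0 d}
  zero_mem' := S.refl 0
  add_mem' {d e} hd he := S.trans hd (by simpa [add_comm] using hS d 0 e he)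
  neg_mem' {d} hd := S.symm (by simpa using hS (-d) 0 d hd)

theorem mem_zeroClass {d : G} : d ∈ S.zeroClass hS ↔ S 0 d := Iff.rfl

theorem rel_iff_sub_mem_zeroClass (p q : G) : S p q ↔ q - p ∈ S.zeroClass hS := by
  rw [mem_zeroClass]
  refine ⟨fun h => by simpa [sub_eq_add_neg] using hS (-p) p q h, fun h => ?_⟩
  simpa using hS p 0 (q - p) h

end Setoid

namespace Matrix

variable {ι : Type*} [Fintype ι] [DecidableEq ι]

/-- The rotation by `π` about the axis `ℝ c` (for `c ≠ 0`). -/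
noncomputable def halfTurn (c : ι → ℝ) : Matrix ι ι ℝ :=
  (2 / (c ⬝ᵥ c)) • vecMulVec c c - 1

theorem halfTurn_mulVec (c x : ι → ℝ) :
    halfTurn c *ᵥ x = (2 / (c ⬝ᵥ c) * (c ⬝ᵥ x)) • c - x := by
  simp [halfTurn, sub_mulVec, smul_mulVec, vecMulVec_mulVec, smul_smul]

theorem transpose_halfTurn (c : ι → ℝ) : (halfTurn c)ᵀ = halfTurn c := by
  simp [halfTurn, transpose_sub, transpose_smul, transpose_vecMulVec]

theorem halfTurn_mul_self {c : ι → ℝ} (hc : c ≠ 0) : halfTurn c * halfTurn c = 1 := by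
  have hcc : c ⬝ᵥ c ≠ 0 := by simpa using hc
  refine ext_iff_mulVec.2 fun x => ?_
  rw [← mulVec_mulVec, one_mulVec, halfTurn_mulVec c x, halfTurn_mulVec, dotProduct_sub,
    dotProduct_smul, smul_eq_mul]
  have hcoeff : 2 / (c ⬝ᵥ c) * (2 / (c ⬝ᵥ c) * (c ⬝ᵥ x) * (c ⬝ᵥ c) - c ⬝ᵥ x) =
      2 / (c ⬝ᵥ c) * (c ⬝ᵥ x) := by
    field_simp
    ring
  rw [hcoeff, sub_sub_cancel]

theorem det_halfTurn {c : ι → ℝ} (hc : c ≠ 0) (hι : Odd (Fintype.card ι)) :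
    (halfTurn c).det = 1 := by
  have hcc : c ⬝ᵥ c ≠ 0 := by simpa using hc
  have hrank_one : halfTurn c =
      -(1 + replicateCol Unit (-((2 / (c ⬝ᵥ c)) • c)) * replicateRow Unit c) := by
    rw [← vecMulVec_eq, halfTurn, neg_vecMulVec, smul_vecMulVec]
    abel
  rw [hrank_one, det_neg, det_one_add_replicateCol_mul_replicateRow, hι.neg_one_pow,
    dotProduct_neg, dotProduct_smul, smul_eq_mul, div_mul_cancel₀ _ hcc]
  norm_num

theorem halfTurn_mem_specialOrthogonalGroup {c : ι → ℝ} (hc : c ≠ 0)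
    (hι : Odd (Fintype.card ι)) : halfTurn c ∈ specialOrthogonalGroup ι ℝ :=
  ⟨(mem_orthogonalGroup_iff ..).2 (by rw [transpose_halfTurn, halfTurn_mul_self hc]),
    det_halfTurn hc hι⟩

theorem halfTurn_sub_mulVec {e u : ι → ℝ} (hu : u ⬝ᵥ u = e ⬝ᵥ e) (hne : e ≠ u) :
    halfTurn (e - u) *ᵥ e = -u := by
  have hcc : (e - u) ⬝ᵥ (e - u) ≠ 0 := fun h => sub_ne_zero.2 hne (dotProduct_self_eq_zero.1 h)
  have hcoeff : 2 / ((e - u) ⬝ᵥ (e - u)) * ((e - u) ⬝ᵥ e) = 1 := by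
    rw [div_mul_eq_mul_div, div_eq_one_iff_eq hcc]
    simp only [sub_dotProduct, dotProduct_sub, dotProduct_comm u e, hu]
    ring
  rw [halfTurn_mulVec, hcoeff, one_smul, sub_sub_cancel_left]

end Matrix

namespace AddSubgroup

variable {ι : Type*} [Fintype ι] [DecidableEq ι]

theorem mem_of_dotProduct_self_eq (K : AddSubgroup (ι → ℝ)) (hι : Odd (Fintype.card ι))
    (hK : ∀ R ∈ specialOrthogonalGroup ι ℝ, ∀ x ∈ K, R *ᵥ x ∈ K) {e u : ι → ℝ} (he : e ∈ K)
    (hu : u ⬝ᵥ u = e ⬝ᵥ e) : u ∈ K := by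
  by_cases hne : e = u
  · exact hne ▸ he
  have hc : e - u ≠ 0 := sub_ne_zero.2 hne
  simpa [halfTurn_sub_mulVec hu hne] using
    K.neg_mem (hK _ (halfTurn_mem_specialOrthogonalGroup hc hι) e he)

theorem eq_top_of_forall_dotProduct_self_eq_mem [Nontrivial ι] (K : AddSubgroup (ι → ℝ))
    {ρ : ℝ} (hρ : 0 < ρ) (hK : ∀ u, u ⬝ᵥ u = ρ → u ∈ K) : K = ⊤ := by
  have hsingle : ∀ i t, t ^ 2 < ρ → Pi.single i t ∈ K := by
    intro i t ht
    obtain ⟨j, hji⟩ := exists_ne i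
    set β := √(ρ - (t / 2) ^ 2)
    have hβ : β ^ 2 = ρ - (t / 2) ^ 2 := Real.sq_sqrt (by nlinarith)
    have hsphere : ∀ γ, γ ^ 2 = β ^ 2 → Pi.single i (t / 2) + Pi.single j γ ∈ K := by
      intro γ hγ
      refine hK _ ?_
      simp only [dotProduct_add, dotProduct_single, Pi.add_apply, Pi.single_eq_same,
        Pi.single_eq_of_ne hji, Pi.single_eq_of_ne hji.symm, add_zero, zero_add]
      nlinarith
    have hsum := add_mem (hsphere β rfl) (hsphere (-β) (neg_sq β))
    rwa [add_add_add_comm, ← Pi.single_add, ← Pi.single_add, add_neg_cancel, Pi.single_zero,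
      add_zero, add_halves] at hsum
  have haxis : ∀ i, K.comap (AddMonoidHom.single _ i) = ⊤ := fun i =>
    eq_top_of_mem_nhds_zero _ <| Filter.mem_of_superset
      ((isOpen_lt (continuous_pow 2) continuous_const).mem_nhds (by simpa using hρ))
      fun t ht => hsingle i t ht
  refine eq_top_iff' K |>.2 fun y => ?_
  rw [← Finset.univ_sum_single y]
  exact sum_mem fun i _ => (haxis i).ge (mem_top (y i))

end AddSubgroup

section Spacetime

variable {K V : Type*} [Field K] [AddCommGroup V] [Module K V]

theorem mk_zero_mem_of_fst_ne_zero (H : AddSubgroup (K × V))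
    (hboost : ∀ v t x, (t, x) ∈ H → (t, x + t • v) ∈ H) {d : K × V} (hd : d ∈ H)
    (hd₁ : d.1 ≠ 0) (y : V) : ((0 : K), y) ∈ H := by
  have hslice : ∀ x, (d.1, x) ∈ H := fun x => by
    simpa [smul_smul, mul_inv_cancel₀ hd₁] using hboost (d.1⁻¹ • (x - d.2)) d.1 d.2 hd
  simpa using sub_mem (hslice y) (hslice 0)

variable {ι : Type*} [Fintype ι] [DecidableEq ι] [Nontrivial ι]

theorem mk_zero_mem_of_boost_rotation_invariant (hι : Odd (Fintype.card ι))
    (H : AddSubgroup (ℝ × (ι → ℝ)))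
    (hboost : ∀ v t x, (t, x) ∈ H → (t, x + t • v) ∈ H)
    (hrot : ∀ R ∈ specialOrthogonalGroup ι ℝ, ∀ x, ((0 : ℝ), x) ∈ H → ((0 : ℝ), R *ᵥ x) ∈ H)
    {d : ℝ × (ι → ℝ)} (hd : d ∈ H) (hd0 : d ≠ 0) (y : ι → ℝ) : ((0 : ℝ), y) ∈ H := by
  rcases ne_or_eq d.1 0 with hd₁ | hd₁
  · exact mk_zero_mem_of_fst_ne_zero H hboost hd hd₁ y
  · set Hspace := H.comap (AddMonoidHom.inr ℝ (ι → ℝ))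
    have he : d.2 ∈ Hspace := by rwa [AddSubgroup.mem_comap, AddMonoidHom.inr_apply, ← hd₁]
    have he0 : d.2 ≠ 0 := fun h => hd0 (Prod.ext hd₁ h)
    have hsphere : ∀ u, u ⬝ᵥ u = d.2 ⬝ᵥ d.2 → u ∈ Hspace :=
      fun u => Hspace.mem_of_dotProduct_self_eq hι hrot he
    have htop := Hspace.eq_top_of_forall_dotProduct_self_eq_mem
      (dotProduct_self_star_pos_iff.2 he0) hsphere
    exact htop.ge (AddSubgroup.mem_top y)

end Spacetime

theorem galAct_one_zero (a : Fin 3 → ℝ) (b : ℝ) (p : ℝ × (Fin 3 → ℝ)) :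
    galAct 1 0 a b p = p + (b, a) := by
  simp [galAct, Prod.ext_iff]

theorem galAct_boost (v : Fin 3 → ℝ) (p : ℝ × (Fin 3 → ℝ)) :
    galAct 1 v 0 0 p = (p.1, p.2 + p.1 • v) := by
  simp [galAct]

theorem galAct_rotation (R : Matrix (Fin 3) (Fin 3) ℝ) (p : ℝ × (Fin 3 → ℝ)) :
    galAct R 0 0 0 p = (p.1, R *ᵥ p.2) := by
  simp [galAct]

theorem IGal_invariant_class_contains_hyperplane_general
    (S : Setoid (ℝ × (Fin 3 → ℝ)))
    (hinv : ∀ (R : Matrix (Fin 3) (Fin 3) ℝ), R ∈ Matrix.specialOrthogonalGroup (Fin 3) ℝ →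
      ∀ (v a : Fin 3 → ℝ) (b : ℝ) (p q : ℝ × (Fin 3 → ℝ)),
        S.r p q ↔ S.r (galAct R v a b p) (galAct R v a b q)) :
    ∀ p q : ℝ × (Fin 3 → ℝ), p ≠ q → S.r p q →
      ∀ r : ℝ × (Fin 3 → ℝ), r.1 = p.1 → S.r p r := by
  intro p q hpq hSpq r hr
  have htrans : ∀ c x y, S x y → S (x + c) (y + c) := fun c x y h => by
    simpa only [galAct_one_zero] using (hinv 1 (one_mem _) 0 c.2 c.1 x y).1 h
  set H := S.zeroClass htrans with hH
  have hboost : ∀ v t x, (t, x) ∈ H → (t, x + t • v) ∈ H := fun v t x h => by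
    simpa [hH, Setoid.mem_zeroClass, galAct_boost, Prod.mk_zero_zero] using (hinv 1 (one_mem _) v 0 0 0 (t, x)).1 h
  have hrot : ∀ R ∈ specialOrthogonalGroup (Fin 3) ℝ, ∀ x, ((0 : ℝ), x) ∈ H →
      ((0 : ℝ), R *ᵥ x) ∈ H := fun R hR x h => by
    simpa [hH, Setoid.mem_zeroClass, galAct_rotation, Prod.mk_zero_zero] using (hinv R hR 0 0 0 0 (0, x)).1 h
  have hd := (S.rel_iff_sub_mem_zeroClass htrans p q).1 hSpq
  have hspatial := mk_zero_mem_of_boost_rotation_invariant (by decide) H hboost hrot hd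
    (sub_ne_zero.2 hpq.symm) (r.2 - p.2)
  rw [S.rel_iff_sub_mem_zeroClass htrans]
  convert hspatial using 1
  ext <;> simp [hr]

/-- For a non-trivial `IGal`-invariant equivalence relation on spacetime, every
equivalence class is a union of constant-time hyperplanes: if `S p q` for
distinct `p, q`, then the whole hyperplane of constant time through `p` is
contained in `[p]`. -/
theorem IGal_invariant_class_contains_hyperplane
    (S : Setoid (ℝ × (Fin 3 → ℝ)))
    (hinv : ∀ (R : Matrix (Fin 3) (Fin 3) ℝ), R ∈ Matrix.specialOrthogonalGroup (Fin 3) ℝ →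
      ∀ (v a : Fin 3 → ℝ) (b : ℝ) (p q : ℝ × (Fin 3 → ℝ)),
        S.r p q ↔ S.r (galAct R v a b p) (galAct R v a b q))
    (hne : ∃ p q, p ≠ q ∧ S.r p q) (hnt : ∃ p q, ¬ S.r p q) :
    ∀ p q : ℝ × (Fin 3 → ℝ), p ≠ q → S.r p q →
      ∀ r : ℝ × (Fin 3 → ℝ), r.1 = p.1 → S.r p r :=
  IGal_invariant_class_contains_hyperplane_general S hinv
end

section
/- The only ILor-invariant equivalence relation on ℝ⁴ relating at least two distinct points is the trivial one in which all of ℝ⁴ is a single equivalence class. In particular there is no non-trivial equivalence relation on Minkowski spacetime invariant under the identity component of the Poincaré group. -/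
/-!
The relation is determined by the class `K` of the origin: translation invariance makes `K` an
additive subgroup with `p ~ q ↔ q - p ∈ K`, and Lorentz invariance makes `K` stable under every
proper orthochronous Lorentz matrix. A nonzero vector of `K` is moved to a nonzero vector on the
`x`-axis by cyclically permuting the spatial axes (after a boost if it lies on the time axis) and
then adding or subtracting its half-turns about the `z`- and `x`-axes. Boosting that vector and
adding its half-turn about the `z`-axis gives an arbitrary point of the time axis; symmetrically,
a boosted time vector minus its half-turn gives an arbitrary point of the `x`-axis. Rotations then
reach the other axes, and the four axes generate `ℝ⁴`.
-/

/-- The Minkowski metric matrix `η = diag(1,-1,-1,-1)`. -/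
def minkowskiEta : Matrix (Fin 4) (Fin 4) ℝ :=
  Matrix.diagonal ![1, -1, -1, -1]

open Matrix Real

/-- The homogeneous part of `ILor`. -/
def IsProperOrthochronousLorentz (L : Matrix (Fin 4) (Fin 4) ℝ) : Prop :=
  L * minkowskiEta * Lᵀ = minkowskiEta ∧ L.det = 1 ∧ 1 ≤ L 0 0

noncomputable def boostX (φ : ℝ) : Matrix (Fin 4) (Fin 4) ℝ :=
  !![cosh φ, sinh φ, 0, 0; sinh φ, cosh φ, 0, 0; 0, 0, 1, 0; 0, 0, 0, 1]

def cyclicXYZ : Matrix (Fin 4) (Fin 4) ℝ :=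
  !![1, 0, 0, 0; 0, 0, 0, 1; 0, 1, 0, 0; 0, 0, 1, 0]

def halfTurnX : Matrix (Fin 4) (Fin 4) ℝ := diagonal ![1, 1, -1, -1]

def halfTurnZ : Matrix (Fin 4) (Fin 4) ℝ := diagonal ![1, -1, -1, 1]

lemma boostX_mulVec (φ : ℝ) (v : Fin 4 → ℝ) :
    boostX φ *ᵥ v = ![cosh φ * v 0 + sinh φ * v 1, sinh φ * v 0 + cosh φ * v 1, v 2, v 3] := by
  ext i; fin_cases i <;> simp [boostX, mulVec, dotProduct, Fin.sum_univ_four]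

lemma cyclicXYZ_mulVec (v : Fin 4 → ℝ) : cyclicXYZ *ᵥ v = ![v 0, v 3, v 1, v 2] := by
  ext i; fin_cases i <;> simp [cyclicXYZ, mulVec, dotProduct, Fin.sum_univ_four]

lemma halfTurnX_mulVec (v : Fin 4 → ℝ) : halfTurnX *ᵥ v = ![v 0, v 1, -v 2, -v 3] := by
  ext i; fin_cases i <;> simp [halfTurnX, mulVec_diagonal]

lemma halfTurnZ_mulVec (v : Fin 4 → ℝ) : halfTurnZ *ᵥ v = ![v 0, -v 1, -v 2, v 3] := by
  ext i; fin_cases i <;> simp [halfTurnZ, mulVec_diagonal]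

namespace IsProperOrthochronousLorentz

lemma diagonal_signs {a b c : ℝ} (ha : a ^ 2 = 1) (hb : b ^ 2 = 1) (hc : c ^ 2 = 1)
    (habc : a * b * c = 1) : IsProperOrthochronousLorentz (diagonal ![1, a, b, c]) := by
  refine ⟨?_, by simp [det_diagonal, Fin.prod_univ_four, habc], by simp⟩
  rw [minkowskiEta, diagonal_transpose, diagonal_mul_diagonal, diagonal_mul_diagonal]
  congr 1
  ext i; fin_cases i <;> simp <;> nlinarith

lemma boostX (φ : ℝ) : IsProperOrthochronousLorentz (boostX φ) := by
  refine ⟨?_, ?_, by simp [_root_.boostX, one_le_cosh]⟩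
  · ext i j
    fin_cases i <;> fin_cases j <;>
      simp [_root_.boostX, minkowskiEta, mul_apply, Fin.sum_univ_four, vecMul_diagonal] <;>
      linarith [cosh_sq_sub_sinh_sq φ]
  · simp [_root_.boostX, det_succ_row_zero, Fin.sum_univ_succ, Fin.succAbove]
    linear_combination cosh_sq_sub_sinh_sq φ

lemma cyclicXYZ : IsProperOrthochronousLorentz cyclicXYZ := by
  refine ⟨?_, ?_, by simp [_root_.cyclicXYZ]⟩
  · ext i j
    fin_cases i <;> fin_cases j <;>
      simp [_root_.cyclicXYZ, minkowskiEta, mul_apply, Fin.sum_univ_four, vecMul_diagonal]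
  · simp [_root_.cyclicXYZ, det_succ_row_zero, Fin.sum_univ_succ, Fin.succAbove]

lemma halfTurnX : IsProperOrthochronousLorentz halfTurnX :=
  diagonal_signs (by norm_num) (by norm_num) (by norm_num) (by norm_num)

lemma halfTurnZ : IsProperOrthochronousLorentz halfTurnZ :=
  diagonal_signs (by norm_num) (by norm_num) (by norm_num) (by norm_num)

end IsProperOrthochronousLorentz

section TranslationInvariant

variable {G : Type*} [AddCommGroup G] (S : Setoid G)
  (htr : ∀ a p q, S.r p q → S.r (p + a) (q + a))

def Setoid.zeroClass_s16 : AddSubgroup G where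
  carrier := {v | S.r 0 v}
  zero_mem' := S.refl 0
  add_mem' {u v} hu hv := S.trans hu (by simpa [add_comm] using htr u 0 v hv)
  neg_mem' {v} hv := S.symm (by simpa using htr (-v) 0 v hv)

lemma Setoid.mem_zeroClass_s16 {v : G} : v ∈ S.zeroClass_s16 htr ↔ S.r 0 v :=
  Iff.rfl

lemma Setoid.rel_iff_sub_mem_zeroClass_s16 {p q : G} : S.r p q ↔ q - p ∈ S.zeroClass_s16 htr := by
  rw [S.mem_zeroClass_s16]
  exact ⟨fun h ↦ by simpa [sub_eq_add_neg] using htr (-p) p q h,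
    fun h ↦ by simpa using htr p 0 (q - p) h⟩

end TranslationInvariant

def AddSubgroup.IsLorentzInvariant (K : AddSubgroup (Fin 4 → ℝ)) : Prop :=
  ∀ L, IsProperOrthochronousLorentz L → ∀ v ∈ K, L *ᵥ v ∈ K

namespace AddSubgroup.IsLorentzInvariant

variable {K : AddSubgroup (Fin 4 → ℝ)}

lemma exists_mem_apply_one_ne_zero (hK : K.IsLorentzInvariant) (hbot : K ≠ ⊥) :
    ∃ w ∈ K, w 1 ≠ 0 := by
  obtain ⟨v, hv, hv0⟩ := K.bot_or_exists_ne_zero.resolve_left hbot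
  have hCv := hK _ .cyclicXYZ v hv
  by_cases h1 : v 1 ≠ 0
  · exact ⟨v, hv, h1⟩
  by_cases h3 : v 3 ≠ 0
  · exact ⟨_, hCv, by simpa [cyclicXYZ_mulVec]⟩
  by_cases h2 : v 2 ≠ 0
  · exact ⟨_, hK _ .cyclicXYZ _ hCv, by simpa [cyclicXYZ_mulVec]⟩
  push Not at h1 h2 h3
  have h0 : v 0 ≠ 0 := fun h0 ↦ hv0 (by ext i; fin_cases i <;> assumption)
  exact ⟨_, hK _ (.boostX 1) v hv, by simp [boostX_mulVec, h0, h1]⟩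

lemma exists_xAxis_mem (hK : K.IsLorentzInvariant) (hbot : K ≠ ⊥) :
    ∃ s ≠ 0, ![0, s, 0, 0] ∈ K := by
  obtain ⟨w, hw, hw1⟩ := hK.exists_mem_apply_one_ne_zero hbot
  set u := w - halfTurnZ *ᵥ w
  have hu : u ∈ K := K.sub_mem hw (hK _ .halfTurnZ w hw)
  have hxu : ![0, 4 * w 1, 0, 0] = u + halfTurnX *ᵥ u := by
    ext i; fin_cases i <;> simp [u, halfTurnX_mulVec, halfTurnZ_mulVec, vecHead, vecTail]; ring
  exact ⟨4 * w 1, by positivity, hxu ▸ K.add_mem hu (hK _ .halfTurnX u hu)⟩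

lemma timeAxis_mem (hK : K.IsLorentzInvariant) {s : ℝ} (hs : s ≠ 0)
    (hsx : ![0, s, 0, 0] ∈ K) (t : ℝ) : ![t, 0, 0, 0] ∈ K := by
  set u := boostX (arsinh (t / (2 * s))) *ᵥ ![0, s, 0, 0]
  have hu : u ∈ K := hK _ (.boostX _) _ hsx
  have htu : ![t, 0, 0, 0] = u + halfTurnZ *ᵥ u := by
    ext i; fin_cases i <;> simp [u, boostX_mulVec, halfTurnZ_mulVec]; field_simp; ring
  exact htu ▸ K.add_mem hu (hK _ .halfTurnZ u hu)

lemma xAxis_mem (hK : K.IsLorentzInvariant) (he₀ : ![1, 0, 0, 0] ∈ K) (s : ℝ) :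
    ![0, s, 0, 0] ∈ K := by
  set u := boostX (arsinh (s / 2)) *ᵥ ![1, 0, 0, 0]
  have hu : u ∈ K := hK _ (.boostX _) _ he₀
  have hsu : ![0, s, 0, 0] = u - halfTurnZ *ᵥ u := by
    ext i; fin_cases i <;> simp [u, boostX_mulVec, halfTurnZ_mulVec]
  exact hsu ▸ K.sub_mem hu (hK _ .halfTurnZ u hu)

theorem eq_top (hK : K.IsLorentzInvariant) (hbot : K ≠ ⊥) : K = ⊤ := by
  obtain ⟨s, hs, hsx⟩ := hK.exists_xAxis_mem hbot
  have ht := hK.timeAxis_mem hs hsx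
  have hx := hK.xAxis_mem (ht 1)
  have hC := hK _ .cyclicXYZ
  refine K.eq_top_iff'.2 fun v ↦ ?_
  have hv : v = ![v 0, 0, 0, 0] + ![0, v 1, 0, 0] + cyclicXYZ *ᵥ ![0, v 2, 0, 0] +
      cyclicXYZ *ᵥ (cyclicXYZ *ᵥ ![0, v 3, 0, 0]) := by
    ext i; fin_cases i <;> simp [cyclicXYZ_mulVec]
  rw [hv]
  exact add_mem (add_mem (add_mem (ht _) (hx _)) (hC _ (hx _))) (hC _ (hC _ (hx _)))

end AddSubgroup.IsLorentzInvariant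

/-- The only equivalence relation on Minkowski spacetime `ℝ⁴` invariant under
the inhomogeneous proper orthochronous Lorentz (Poincaré) group and relating at
least two distinct points is the total relation; hence there is no non-trivial
`ILor`-invariant equivalence relation. -/
theorem ILor_invariant_rel_trivial
    (S : Setoid (Fin 4 → ℝ))
    (hinv : ∀ L : Matrix (Fin 4) (Fin 4) ℝ,
      L * minkowskiEta * L.transpose = minkowskiEta → L.det = 1 → 1 ≤ L 0 0 →
      ∀ (a : Fin 4 → ℝ) (p q : Fin 4 → ℝ),
        S.r p q ↔ S.r (L.mulVec p + a) (L.mulVec q + a))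
    (hne : ∃ p q, p ≠ q ∧ S.r p q) :
    ∀ p q : Fin 4 → ℝ, S.r p q := by
  have htr : ∀ a p q, S.r p q → S.r (p + a) (q + a) := fun a p q h ↦ by
    simpa using (hinv 1 (by simp) (by simp) (by simp) a p q).1 h
  have hK : (S.zeroClass_s16 htr).IsLorentzInvariant := fun L hL v hv ↦ by
    rw [S.mem_zeroClass_s16] at hv ⊢
    simpa using (hinv L hL.1 hL.2.1 hL.2.2 0 0 v).1 hv
  have hbot : S.zeroClass_s16 htr ≠ ⊥ := by
    obtain ⟨p, q, hpq, h⟩ := hne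
    intro hbot
    rw [S.rel_iff_sub_mem_zeroClass_s16 htr, hbot, AddSubgroup.mem_bot, sub_eq_zero] at h
    exact hpq h.symm
  intro p q
  rw [S.rel_iff_sub_mem_zeroClass_s16 htr, hK.eq_top hbot]
  exact AddSubgroup.mem_top _
end

section
/- Let G = ℝ × Euc act on ℝ⁴ = ℝ × ℝ³ by (b,(D,a))·(t,x) = (t+b, Dx+a). The unique non-trivial G-invariant equivalence relation on ℝ⁴ each of whose equivalence classes meets every timelike straight line in at most one point is the relation of equal time coordinate (Einstein simultaneity): S(p,q) ⟺ t(p) = t(q). -/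
/-!
Let `S` be such a relation and `V = {v | p ~ p + v for all p}` its group of shifts; translation
invariance gives `p ~ q ↔ q - p ∈ V`, and `V` is stable under rotating the spatial part.
Adding the four images of `v ∈ V` under the diagonal rotations `diag(±1, ±1, ±1)` yields the
purely temporal vector `(4 v₀, 0) ∈ V`, and a timelike line meets the class of a point only
once, so `v₀ = 0`. Non-triviality gives a non-zero spatial vector in `V`; a rotation-invariant
subgroup of `ℝ³` containing a vector of length `r` contains the whole sphere of radius `r`,
hence every sum of two such vectors, i.e. the ball of radius `2r`, so it is open and therefore
all of `ℝ³`. Thus `V = {0} × ℝ³`.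
-/

/-- The action of an element `(b, (D, a))` of `ℝ × Euc(3)` (time translations
together with Euclidean motions of space) on spacetime `ℝ × ℝ³`:
`(t, x) ↦ (t + b, D x + a)`. -/
def frameAct (b : ℝ) (D : Matrix (Fin 3) (Fin 3) ℝ) (a : Fin 3 → ℝ) :
    ℝ × (Fin 3 → ℝ) → ℝ × (Fin 3 → ℝ) :=
  fun p => (p.1 + b, D.mulVec p.2 + a)

/-- `S` is a non-trivial `ℝ × Euc`-invariant equivalence relation each of whose
equivalence classes meets every timelike straight line (direction `u` with
`η(u,u) > 0`) in at most one point. -/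
def GoodSimRel (S : Setoid (ℝ × (Fin 3 → ℝ))) : Prop :=
  (∀ (b : ℝ) (D : Matrix (Fin 3) (Fin 3) ℝ),
    D ∈ Matrix.specialOrthogonalGroup (Fin 3) ℝ →
    ∀ (a : Fin 3 → ℝ) (p q : ℝ × (Fin 3 → ℝ)),
      S.r p q ↔ S.r (frameAct b D a p) (frameAct b D a q)) ∧
  (∃ p q, p ≠ q ∧ S.r p q) ∧ (∃ p q, ¬ S.r p q) ∧
  (∀ base u : ℝ × (Fin 3 → ℝ), (∑ i, u.2 i ^ 2) < u.1 ^ 2 →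
    ∀ s t : ℝ, S.r (base + s • u) (base + t • u) → s = t)

open Matrix

namespace Matrix

variable {n K : Type*} [Fintype n]

theorem dotProduct_self_pos {v : n → ℝ} (hv : v ≠ 0) : 0 < v ⬝ᵥ v := by
  simpa using dotProduct_star_self_pos_iff.2 hv

theorem diagonal_mem_specialOrthogonalGroup [DecidableEq n] {R : Type*} [CommRing R]
    {d : n → R} (hd : ∀ i, d i * d i = 1) (hdet : ∏ i, d i = 1) :
    diagonal d ∈ specialOrthogonalGroup n R := by
  refine mem_specialOrthogonalGroup_iff.2 ⟨(mem_orthogonalGroup_iff _ _).2 ?_, ?_⟩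
  · rw [diagonal_transpose, diagonal_mul_diagonal, funext hd, diagonal_one]
  · rw [det_diagonal, hdet]

variable [DecidableEq n] [Field K]

def householder (v : n → K) : Matrix n n K := 1 - (2 / (v ⬝ᵥ v)) • vecMulVec v v

theorem householder_mulVec (v x : n → K) :
    householder v *ᵥ x = x - (2 * (v ⬝ᵥ x) / (v ⬝ᵥ v)) • v := by
  rw [householder, sub_mulVec, one_mulVec, smul_mulVec, vecMulVec_mulVec, op_smul_eq_smul,
    smul_smul, div_mul_eq_mul_div]

theorem transpose_householder (v : n → K) : (householder v)ᵀ = householder v := by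
  rw [householder, transpose_sub, transpose_one, transpose_smul, transpose_vecMulVec]

theorem householder_mul_self {v : n → K} (hv : v ⬝ᵥ v ≠ 0) :
    householder v * householder v = 1 := by
  have hsq : vecMulVec v v * vecMulVec v v = (v ⬝ᵥ v) • vecMulVec v v := by
    rw [vecMulVec_mul_vecMulVec, vecMulVec_smul]
  simp only [householder, sub_mul, mul_sub, one_mul, mul_one, smul_mul_smul_comm, hsq, smul_smul]
  rw [show 2 / (v ⬝ᵥ v) * (2 / (v ⬝ᵥ v)) * (v ⬝ᵥ v) = 2 / (v ⬝ᵥ v) + 2 / (v ⬝ᵥ v) by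
    field_simp; ring, add_smul]
  abel

theorem det_householder {v : n → K} (hv : v ⬝ᵥ v ≠ 0) : (householder v).det = -1 := by
  have : householder v = 1 + replicateCol Unit (-(2 / (v ⬝ᵥ v)) • v) * replicateRow Unit v := by
    rw [← vecMulVec_eq, smul_vecMulVec, householder, neg_smul, sub_eq_add_neg]
  rw [this, det_one_add_replicateCol_mul_replicateRow, dotProduct_smul, smul_eq_mul]
  field_simp
  ring

theorem householder_mul_householder_mem_specialOrthogonalGroup {v w : n → K}
    (hv : v ⬝ᵥ v ≠ 0) (hw : w ⬝ᵥ w ≠ 0) :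
    householder v * householder w ∈ specialOrthogonalGroup n K := by
  refine mem_specialOrthogonalGroup_iff.2 ⟨(mem_orthogonalGroup_iff _ _).2 ?_, ?_⟩
  · rw [transpose_mul, transpose_householder, transpose_householder, Matrix.mul_assoc,
      ← Matrix.mul_assoc (householder w), householder_mul_self hw, Matrix.one_mul,
      householder_mul_self hv]
  · rw [det_mul, det_householder hv, det_householder hw]; norm_num

theorem householder_mulVec_of_dotProduct_eq_zero {v x : n → K} (h : v ⬝ᵥ x = 0) :
    householder v *ᵥ x = x := by
  rw [householder_mulVec, h]; simp

theorem householder_sub_mulVec {x y : n → K} (h : x ⬝ᵥ x = y ⬝ᵥ y)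
    (hxy : (x - y) ⬝ᵥ (x - y) ≠ 0) : householder (x - y) *ᵥ x = y := by
  have : 2 * ((x - y) ⬝ᵥ x) = (x - y) ⬝ᵥ (x - y) := by
    simp only [sub_dotProduct, dotProduct_sub, dotProduct_comm y x, h]; ring
  rw [householder_mulVec, this, div_self hxy, one_smul, sub_sub_cancel]

theorem exists_ne_zero_dotProduct_eq_zero [Nontrivial n] (y : n → K) :
    ∃ w ≠ 0, w ⬝ᵥ y = 0 := by
  obtain ⟨i, j, hij⟩ := exists_pair_ne n
  by_cases hy : y i = 0
  · exact ⟨Pi.single i 1, by simp, by rw [single_dotProduct, hy, mul_zero]⟩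
  · refine ⟨y j • Pi.single i 1 - y i • Pi.single j 1, fun h => hy ?_, ?_⟩
    · simpa [hij.symm] using congrFun h j
    · simp only [sub_dotProduct, smul_dotProduct, single_dotProduct, smul_eq_mul]; ring

theorem exists_mem_specialOrthogonalGroup_mulVec_eq [LinearOrder K] [IsStrictOrderedRing K]
    [Nontrivial n] {x y : n → K} (h : x ⬝ᵥ x = y ⬝ᵥ y) :
    ∃ D ∈ specialOrthogonalGroup n K, D *ᵥ x = y := by
  by_cases hxy : x = y
  · exact ⟨1, one_mem _, by rw [one_mulVec, hxy]⟩
  obtain ⟨w, hw, hwy⟩ := exists_ne_zero_dotProduct_eq_zero y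
  have hxy' : (x - y) ⬝ᵥ (x - y) ≠ 0 := dotProduct_self_eq_zero.not.2 (sub_ne_zero.2 hxy)
  refine ⟨householder w * householder (x - y),
    householder_mul_householder_mem_specialOrthogonalGroup
      (dotProduct_self_eq_zero.not.2 hw) hxy', ?_⟩
  rw [← mulVec_mulVec, householder_sub_mulVec h hxy',
    householder_mulVec_of_dotProduct_eq_zero hwy]

theorem exists_add_eq_of_dotProduct_self_le [Nontrivial n] {v : n → ℝ} {r : ℝ}
    (hv : v ⬝ᵥ v ≤ 4 * r) : ∃ a b : n → ℝ, a ⬝ᵥ a = r ∧ b ⬝ᵥ b = r ∧ a + b = v := by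
  obtain ⟨w, hw, hwv⟩ := exists_ne_zero_dotProduct_eq_zero v
  have hww : 0 < w ⬝ᵥ w := dotProduct_self_pos hw
  -- `a, b = v / 2 ± z` with `z ⊥ v` and `z ⬝ᵥ z = r - v ⬝ᵥ v / 4`
  set z := √((r - v ⬝ᵥ v / 4) / (w ⬝ᵥ w)) • w
  have hzv : z ⬝ᵥ v = 0 := by rw [smul_dotProduct, hwv, smul_zero]
  have hzz : z ⬝ᵥ z = r - v ⬝ᵥ v / 4 := by
    rw [smul_dotProduct, dotProduct_smul, smul_smul, smul_eq_mul, ← sq,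
      Real.sq_sqrt (div_nonneg (by linarith) hww.le), div_mul_cancel₀ _ hww.ne']
  refine ⟨(1 / 2 : ℝ) • v + z, (1 / 2 : ℝ) • v - z, ?_, ?_, by module⟩ <;>
  · simp only [add_dotProduct, sub_dotProduct, dotProduct_add, dotProduct_sub, smul_dotProduct,
      dotProduct_smul, dotProduct_comm v z, hzv, hzz, smul_eq_mul]
    ring

end Matrix

theorem AddSubgroup.eq_top_of_specialOrthogonalGroup_invariant {n : Type*} [Fintype n]
    [DecidableEq n] [Nontrivial n] {W : AddSubgroup (n → ℝ)}
    (hW : ∀ D ∈ specialOrthogonalGroup n ℝ, ∀ x ∈ W, D *ᵥ x ∈ W)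
    {x₀ : n → ℝ} (hx₀ : x₀ ∈ W) (hx₀_ne : x₀ ≠ 0) : W = ⊤ := by
  have sphere : ∀ y : n → ℝ, y ⬝ᵥ y = x₀ ⬝ᵥ x₀ → y ∈ W := fun y hy => by
    obtain ⟨D, hD, rfl⟩ := exists_mem_specialOrthogonalGroup_mulVec_eq hy.symm
    exact hW D hD x₀ hx₀
  have ball : {v : n → ℝ | v ⬝ᵥ v < 4 * (x₀ ⬝ᵥ x₀)} ⊆ W := fun v hv => by
    obtain ⟨a, b, ha, hb, rfl⟩ := exists_add_eq_of_dotProduct_self_le (le_of_lt hv)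
    exact W.add_mem (sphere a ha) (sphere b hb)
  have hopen : IsOpen (W : Set (n → ℝ)) := by
    refine W.isOpen_of_mem_nhds (Filter.mem_of_superset (IsOpen.mem_nhds ?_ ?_) ball) (g := 0)
    · exact isOpen_lt (continuous_id.dotProduct continuous_id) continuous_const
    · simpa using dotProduct_self_pos hx₀_ne
  exact AddSubgroup.coe_eq_univ.1 <|
    IsClopen.eq_univ ⟨W.isClosed_of_isOpen hopen, hopen⟩ ⟨0, W.zero_mem⟩

namespace Setoid

variable {E : Type*} [AddGroup E] (S : Setoid E)

def shifts : AddSubgroup E where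
  carrier := {v | ∀ p, S p (p + v)}
  zero_mem' p := by rw [add_zero]
  add_mem' {v w} hv hw p := by rw [← add_assoc]; exact S.trans (hv p) (hw (p + v))
  neg_mem' {v} hv p := by simpa using S.symm (hv (p + -v))

variable {S}

theorem rel_iff_neg_add_mem_shifts (h : ∀ c p q, S p q → S (c + p) (c + q)) {p q : E} :
    S p q ↔ -p + q ∈ S.shifts := by
  refine ⟨fun hpq c => ?_, fun hv => by simpa using hv p⟩
  simpa [add_assoc] using h (c + -p) p q hpq

end Setoid

local notation "𝕄" => ℝ × (Fin 3 → ℝ)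

theorem frameAct_add (b : ℝ) (D : Matrix (Fin 3) (Fin 3) ℝ) (a : Fin 3 → ℝ) (p v : 𝕄) :
    frameAct b D a (p + v) = frameAct b D a p + (v.1, D *ᵥ v.2) := by
  simp only [frameAct, Prod.fst_add, Prod.snd_add, mulVec_add, Prod.mk_add_mk]
  congr 1 <;> abel

theorem frameAct_one (b : ℝ) (a : Fin 3 → ℝ) (p : 𝕄) : frameAct b 1 a p = (b, a) + p :=
  Prod.ext (add_comm _ _) (by simp only [frameAct, one_mulVec, Prod.snd_add]; exact add_comm _ _)

theorem goodSimRel_ker_fst : GoodSimRel (Setoid.ker (Prod.fst : 𝕄 → ℝ)) := by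
  refine ⟨fun b D _ a p q => (add_left_inj b).symm, ⟨(0, 0), (0, fun _ => 1), ?_, rfl⟩,
    ⟨(0, 0), (1, 0), zero_ne_one⟩, fun base u hu s t hst => ?_⟩
  · simp [Prod.ext_iff, funext_iff]
  · have hu₁ : u.1 ≠ 0 := by
      intro h
      rw [h] at hu
      exact (Finset.sum_nonneg fun i _ => sq_nonneg (u.2 i)).not_gt (by simpa using hu)
    exact mul_right_cancel₀ hu₁ (add_left_cancel (a := base.1) (by simpa using hst))

namespace GoodSimRel

variable {S : Setoid 𝕄}

theorem rel_iff_sub_mem_shifts (hS : GoodSimRel S) {p q : 𝕄} : S p q ↔ q - p ∈ S.shifts := by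
  rw [sub_eq_neg_add]
  refine Setoid.rel_iff_neg_add_mem_shifts (fun c p q hpq => ?_)
  simpa [frameAct_one] using (hS.1 c.1 1 (one_mem _) c.2 p q).1 hpq

theorem mem_shifts_rotate (hS : GoodSimRel S) {D : Matrix (Fin 3) (Fin 3) ℝ}
    (hD : D ∈ specialOrthogonalGroup (Fin 3) ℝ) {v : 𝕄} (hv : v ∈ S.shifts) :
    (v.1, D *ᵥ v.2) ∈ S.shifts := fun c => by
  have h := (hS.1 0 D hD c.2 (c.1, 0) ((c.1, 0) + v)).1 (hv (c.1, 0))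
  rwa [frameAct_add, show frameAct 0 D c.2 (c.1, 0) = c by simp [frameAct]] at h

theorem fst_eq_zero_of_mem_shifts (hS : GoodSimRel S) {v : 𝕄} (hv : v ∈ S.shifts) :
    v.1 = 0 := by
  have rot : ∀ d : Fin 3 → ℝ, (∀ i, d i * d i = 1) → ∏ i, d i = 1 →
      (v.1, diagonal d *ᵥ v.2) ∈ S.shifts := fun d hd hdet =>
    hS.mem_shifts_rotate (diagonal_mem_specialOrthogonalGroup hd hdet) hv
  have hsum : v + (v.1, diagonal ![1, -1, -1] *ᵥ v.2) + (v.1, diagonal ![-1, 1, -1] *ᵥ v.2)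
      + (v.1, diagonal ![-1, -1, 1] *ᵥ v.2) = (4 * v.1, 0) := by
    refine Prod.ext (by simp only [Prod.fst_add]; ring) (funext fun i => ?_)
    fin_cases i <;> simp [mulVec_diagonal]
  have htime : ((4 * v.1, 0) : 𝕄) ∈ S.shifts := by
    rw [← hsum]
    refine add_mem (add_mem (add_mem hv (rot _ ?_ ?_)) (rot _ ?_ ?_)) (rot _ ?_ ?_)
    all_goals first
      | (intro i; fin_cases i <;> norm_num)
      | simp [Fin.prod_univ_three]
  by_contra h
  have htimelike : ∑ i, (0 : Fin 3 → ℝ) i ^ 2 < (4 * v.1) ^ 2 := by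
    simpa using sq_pos_of_ne_zero (mul_ne_zero four_ne_zero h)
  have := hS.2.2.2 0 (4 * v.1, 0) htimelike 0 1 (by simpa using htime 0)
  norm_num at this

theorem shifts_eq_ker_fst (hS : GoodSimRel S) :
    S.shifts = (AddMonoidHom.fst ℝ (Fin 3 → ℝ)).ker := by
  refine le_antisymm (fun v hv => hS.fst_eq_zero_of_mem_shifts hv) fun v hv => ?_
  obtain ⟨p, q, hpq, hSpq⟩ := hS.2.1
  have hqp : q - p ∈ S.shifts := hS.rel_iff_sub_mem_shifts.1 hSpq
  have hqp_fst : (q - p).1 = 0 := hS.fst_eq_zero_of_mem_shifts hqp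
  have hspace : S.shifts.comap (AddMonoidHom.inr ℝ (Fin 3 → ℝ)) = ⊤ := by
    refine AddSubgroup.eq_top_of_specialOrthogonalGroup_invariant
      (fun D hD x hx => by simpa using hS.mem_shifts_rotate hD hx) (x₀ := (q - p).2) ?_ ?_
    · rwa [AddSubgroup.mem_comap, AddMonoidHom.inr_apply,
        show ((0 : ℝ), (q - p).2) = q - p from Prod.ext hqp_fst.symm rfl]
    · intro h
      exact hpq (sub_eq_zero.1 (Prod.ext hqp_fst h)).symm
  rw [show v = (0, v.2) from Prod.ext hv rfl]
  exact AddSubgroup.mem_comap.1 (hspace ▸ AddSubgroup.mem_top v.2 :)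

end GoodSimRel

/-- Einstein simultaneity (equality of the time coordinate) is the unique
non-trivial equivalence relation on Minkowski spacetime which is invariant
under the stabiliser of an inertial frame and whose classes meet every timelike
straight line in at most one point. -/
theorem einstein_simultaneity_unique :
    GoodSimRel (Setoid.ker (Prod.fst : ℝ × (Fin 3 → ℝ) → ℝ)) ∧
    (∀ S : Setoid (ℝ × (Fin 3 → ℝ)), GoodSimRel S →
      ∀ p q : ℝ × (Fin 3 → ℝ), S.r p q ↔ p.1 = q.1) := by
  refine ⟨goodSimRel_ker_fst, fun S hS p q => ?_⟩
  rw [hS.rel_iff_sub_mem_shifts, hS.shifts_eq_ker_fst, AddMonoidHom.mem_ker,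
    AddMonoidHom.coe_fst, Prod.fst_sub, sub_eq_zero, eq_comm]
end
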